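/- arXiv:1910.11984 — 10 statements merged into one kernel-verified Lean document; each statement's English description precedes it below -/
import Mathlib

section
/- For every real p×m matrix Y (p, m ≥ 1) and every real α > 0, writing A = tr((Y Yᵀ + α I_p)⁻¹) and B = tr((Yᵀ Y + α I_m)⁻¹), one has (m − p)·A + α·A² = (p − m)·B + α·B². -/
/-!
Put `M = Y Yᵀ + α I` and `N = Yᵀ Y + α I`. From `M Y = Y N` we get the push-through identity
`M⁻¹ Y = Y N⁻¹`, hence `tr (M⁻¹ Y Yᵀ) = tr (N⁻¹ Yᵀ Y)` by cyclicity of the trace. Since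
`M⁻¹ Y Yᵀ = I - α M⁻¹`, this reads `p - α A = m - α B`, i.e. `α (B - A) = m - p`, and the claimed
identity is this relation multiplied by `A + B`.
-/

open Matrix

namespace Matrix

variable {l n R : Type*} [Fintype l] [Fintype n] [DecidableEq l] [DecidableEq n] [CommRing R]

theorem inv_add_smul_one_mul_eq_mul_inv (A : Matrix l n R) (B : Matrix n l R) (α : R)
    (hAB : IsUnit (A * B + α • 1)) (hBA : IsUnit (B * A + α • 1)) :
    (A * B + α • 1)⁻¹ * A = A * (B * A + α • 1)⁻¹ := by
  have hAB' := (isUnit_iff_isUnit_det _).mp hAB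
  have hBA' := (isUnit_iff_isUnit_det _).mp hBA
  have hcomm : (A * B + α • 1) * A = A * (B * A + α • 1) := by
    rw [Matrix.add_mul, Matrix.mul_add, Matrix.smul_mul, Matrix.one_mul, Matrix.mul_smul,
      Matrix.mul_one, Matrix.mul_assoc]
  calc (A * B + α • 1)⁻¹ * A
      = (A * B + α • 1)⁻¹ * (A * (B * A + α • 1)) * (B * A + α • 1)⁻¹ := by
        rw [Matrix.mul_assoc, Matrix.mul_assoc, mul_nonsing_inv _ hBA', Matrix.mul_one]
    _ = A * (B * A + α • 1)⁻¹ := by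
        rw [← hcomm, ← Matrix.mul_assoc, nonsing_inv_mul _ hAB', Matrix.one_mul]

theorem trace_inv_add_smul_one_mul (X : Matrix n n R) (α : R) (hX : IsUnit (X + α • 1)) :
    ((X + α • 1)⁻¹ * X).trace = Fintype.card n - α * (X + α • 1)⁻¹.trace := by
  have hXinv : (X + α • 1)⁻¹ * X = 1 - α • (X + α • 1)⁻¹ := by
    have hinv := nonsing_inv_mul _ ((isUnit_iff_isUnit_det _).mp hX)
    rw [Matrix.mul_add, Matrix.mul_smul, Matrix.mul_one] at hinv
    exact eq_sub_of_add_eq hinv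
  rw [hXinv, trace_sub, trace_smul, trace_one, smul_eq_mul]

/-- Both sides equal `tr ((A B + α I)⁻¹ A B) = tr ((B A + α I)⁻¹ B A)`. -/
theorem card_sub_mul_trace_inv_add_smul_one_comm (A : Matrix l n R) (B : Matrix n l R)
    (α : R) (hAB : IsUnit (A * B + α • 1)) (hBA : IsUnit (B * A + α • 1)) :
    Fintype.card l - α * (A * B + α • 1)⁻¹.trace =
      Fintype.card n - α * (B * A + α • 1)⁻¹.trace := by
  rw [← trace_inv_add_smul_one_mul _ _ hAB, ← trace_inv_add_smul_one_mul _ _ hBA,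
    ← Matrix.mul_assoc, inv_add_smul_one_mul_eq_mul_inv A B α hAB hBA, Matrix.mul_assoc,
    trace_mul_comm, Matrix.mul_assoc]

theorem isUnit_mul_transpose_add_smul_one {m : Type*} [Fintype m] (Y : Matrix l m ℝ) {α : ℝ}
    (hα : 0 < α) : IsUnit (Y * Yᵀ + α • 1) := by
  have hYYt : (Y * Yᵀ).PosSemidef := by
    simpa only [conjTranspose_eq_transpose_of_trivial] using posSemidef_self_mul_conjTranspose Y
  exact (PosDef.posSemidef_add hYYt (PosDef.one.smul hα)).isUnit

end Matrix

theorem trace_ridge_inverse_identity_general (p m : ℕ)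
    (Y : Matrix (Fin p) (Fin m) ℝ) (α : ℝ) (hα : 0 < α) :
    ((m : ℝ) - p) * ((Y * Yᵀ + α • (1 : Matrix (Fin p) (Fin p) ℝ))⁻¹).trace
        + α * (((Y * Yᵀ + α • (1 : Matrix (Fin p) (Fin p) ℝ))⁻¹).trace) ^ 2
      = ((p : ℝ) - m) * ((Yᵀ * Y + α • (1 : Matrix (Fin m) (Fin m) ℝ))⁻¹).trace
        + α * (((Yᵀ * Y + α • (1 : Matrix (Fin m) (Fin m) ℝ))⁻¹).trace) ^ 2 := by
  have hYtY := isUnit_mul_transpose_add_smul_one Yᵀ hα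
  rw [transpose_transpose] at hYtY
  have hkey := card_sub_mul_trace_inv_add_smul_one_comm Y Yᵀ α
    (isUnit_mul_transpose_add_smul_one Y hα) hYtY
  simp only [Fintype.card_fin] at hkey
  linear_combination (-((Y * Yᵀ + α • 1)⁻¹.trace + (Yᵀ * Y + α • 1)⁻¹.trace)) * hkey

/-- For every real `p × m` matrix `Y` and every `α > 0`, writing
`A = tr((Y Yᵀ + α I_p)⁻¹)` and `B = tr((Yᵀ Y + α I_m)⁻¹)`, one has
`(m − p)·A + α·A² = (p − m)·B + α·B²`. -/
theorem trace_ridge_inverse_identity (p m : ℕ) (hp : 1 ≤ p) (hm : 1 ≤ m)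
    (Y : Matrix (Fin p) (Fin m) ℝ) (α : ℝ) (hα : 0 < α) :
    ((m : ℝ) - p) * ((Y * Yᵀ + α • (1 : Matrix (Fin p) (Fin p) ℝ))⁻¹).trace
        + α * (((Y * Yᵀ + α • (1 : Matrix (Fin p) (Fin p) ℝ))⁻¹).trace) ^ 2
      = ((p : ℝ) - m) * ((Yᵀ * Y + α • (1 : Matrix (Fin m) (Fin m) ℝ))⁻¹).trace
        + α * (((Yᵀ * Y + α • (1 : Matrix (Fin m) (Fin m) ℝ))⁻¹).trace) ^ 2 :=
  trace_ridge_inverse_identity_general p m Y α hα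
end

section
/- With V = (W + c·(tr W)·I_p)⁻¹, one has 1/(1+c) ≤ tr(V W) ≤ p/(1 + c p). -/
open Matrix Finset

/-!
Diagonalising `W = U diag(λ) Uᴴ`, with `λᵢ ≥ 0` and `∑ λᵢ = t := tr W`, gives
`tr(V W) = ∑ λᵢ / (λᵢ + c t)`. Since `λᵢ ≤ t`, each summand is at least `λᵢ / (t + c t)`,
which sums to `1 / (1 + c)`. For the upper bound write `λᵢ / (λᵢ + c t) = 1 - c t / (λᵢ + c t)`
and bound `∑ 1 / (λᵢ + c t)` from below by `p² / (t + p c t)` (Cauchy–Schwarz).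
-/

namespace Finset

variable {ι : Type*} (s : Finset ι) {d : ι → ℝ} {a : ℝ}

theorem sum_div_sum_add_le_sum_div_add (hd : ∀ i ∈ s, 0 ≤ d i) (ha : 0 < a) :
    (∑ i ∈ s, d i) / (∑ i ∈ s, d i + a) ≤ ∑ i ∈ s, d i / (d i + a) := by
  rw [sum_div]
  refine sum_le_sum fun i hi => div_le_div_of_nonneg_left (hd i hi) (by linarith [hd i hi]) ?_
  linarith [single_le_sum hd hi]

theorem sum_div_add_le_card_mul_sum_div (hd : ∀ i ∈ s, 0 ≤ d i) (ha : 0 < a) :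
    ∑ i ∈ s, d i / (d i + a) ≤ #s * (∑ i ∈ s, d i) / (∑ i ∈ s, d i + #s * a) := by
  have hpos : ∀ i ∈ s, 0 < d i + a := fun i hi => by linarith [hd i hi]
  have hCS := sq_sum_div_le_sum_sq_div s (fun _ => (1 : ℝ)) hpos
  simp only [sum_const, nsmul_eq_mul, mul_one, one_pow, sum_add_distrib] at hCS
  have hsplit : ∑ i ∈ s, d i / (d i + a) = #s - a * ∑ i ∈ s, 1 / (d i + a) := by
    rw [eq_sub_iff_add_eq, mul_sum, ← sum_add_distrib, card_eq_sum_ones, Nat.cast_sum]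
    refine sum_congr rfl fun i hi => ?_
    field_simp [(hpos i hi).ne']
    simp
  rcases (#s).eq_zero_or_pos with hs | hs
  · simp_all
  have hden : 0 < ∑ i ∈ s, d i + #s * a := by
    have := sum_nonneg hd
    positivity
  rw [hsplit, le_div_iff₀ hden]
  rw [div_le_iff₀ hden] at hCS
  nlinarith

end Finset

section Trace

variable {n : Type*} [Fintype n] [DecidableEq n]

theorem Matrix.trace_conjStarAlgAut {R : Type*} [CommRing R] [StarRing R]
    (U : unitary (Matrix n n R)) (X : Matrix n n R) :
    (Unitary.conjStarAlgAut R _ U X).trace = X.trace := by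
  rw [Unitary.conjStarAlgAut_apply, trace_mul_cycle, Unitary.coe_star_mul_self, one_mul]

theorem Matrix.IsHermitian.trace_inv_add_smul_one_mul {A : Matrix n n ℝ} (hA : A.IsHermitian)
    {a : ℝ} (ha : ∀ i, hA.eigenvalues i + a ≠ 0) :
    ((A + a • 1)⁻¹ * A).trace = ∑ i, hA.eigenvalues i / (hA.eigenvalues i + a) := by
  set φ := Unitary.conjStarAlgAut ℝ _ hA.eigenvectorUnitary
  set e := hA.eigenvalues
  have hA' : A = φ (diagonal e) := by
    simpa only [RCLike.ofReal_real_eq_id, Function.id_comp] using hA.spectral_theorem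
  have hshift : A + a • 1 = φ (diagonal fun i => e i + a) := by
    rw [← diagonal_add, map_add, ← hA', ← smul_one_eq_diagonal, map_smul, map_one]
  have hinv : (A + a • 1)⁻¹ = φ (diagonal fun i => (e i + a)⁻¹) := by
    refine inv_eq_left_inv ?_
    rw [hshift, ← map_mul, diagonal_mul_diagonal]
    simp [ha]
  rw [hinv, hA', ← map_mul, trace_conjStarAlgAut, diagonal_mul_diagonal, trace_diagonal]
  simp [div_eq_inv_mul]

end Trace

theorem trace_VW_bounds_general (p : ℕ) (W : Matrix (Fin p) (Fin p) ℝ)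
    (hW : W.PosSemidef) (htr : 0 < W.trace) (c : ℝ) (hc : 0 < c)
    (V : Matrix (Fin p) (Fin p) ℝ) (hV : V = (W + (c * W.trace) • 1)⁻¹) :
    1 / (1 + c) ≤ (V * W).trace ∧ (V * W).trace ≤ p / (1 + c * p) := by
  set t := W.trace
  have hH := hW.isHermitian
  have hev : ∀ i ∈ univ, 0 ≤ hH.eigenvalues i := fun i _ => hW.eigenvalues_nonneg i
  have hsum : ∑ i, hH.eigenvalues i = t := by simpa using hH.trace_eq_sum_eigenvalues.symm
  have hct : 0 < c * t := mul_pos hc htr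
  have htrace : (V * W).trace = ∑ i, hH.eigenvalues i / (hH.eigenvalues i + c * t) :=
    hV ▸ hH.trace_inv_add_smul_one_mul fun i => by linarith [hev i (mem_univ i)]
  have lower := sum_div_sum_add_le_sum_div_add univ hev hct
  have upper := sum_div_add_le_card_mul_sum_div univ hev hct
  rw [hsum] at lower
  rw [hsum, card_univ, Fintype.card_fin] at upper
  rw [htrace]
  constructor
  · calc 1 / (1 + c) = t / (t + c * t) := by field_simp
      _ ≤ _ := lower
  · calc _ ≤ p * t / (t + p * (c * t)) := upper
      _ = p / (1 + c * p) := by field_simp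

/-- With `V = (W + c·(tr W)·I_p)⁻¹`, one has `1/(1+c) ≤ tr(V W) ≤ p/(1 + c p)`. -/
theorem trace_VW_bounds (p : ℕ) (hp : 1 ≤ p) (W : Matrix (Fin p) (Fin p) ℝ)
    (hW : W.PosSemidef) (htr : 0 < W.trace) (c : ℝ) (hc : 0 < c)
    (V : Matrix (Fin p) (Fin p) ℝ) (hV : V = (W + (c * W.trace) • 1)⁻¹) :
    1 / (1 + c) ≤ (V * W).trace ∧ (V * W).trace ≤ p / (1 + c * p) :=
  trace_VW_bounds_general p W hW htr c hc V hV
end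

section
/- With V = (W + c·(tr W)·I_p)⁻¹, one has p²/(1 + c p) ≤ tr(V)·tr(W) ≤ p/c. -/
/-!
If `λ i ≥ 0` are the eigenvalues of `W` and `T = ∑ λ i = tr W`, then `V` is the function
`x ↦ (x + c T)⁻¹` of `W`, so `tr V = ∑ (λ i + c T)⁻¹` and the claim becomes a scalar one.
Each term is at most `(c T)⁻¹`, which gives the upper bound. For the lower bound, Cauchy–Schwarz
gives `p² ≤ (∑ μ i) (∑ (μ i)⁻¹)` for `μ i = λ i + c T`, and `∑ μ i = T (1 + c p)`.
-/

open Matrix Finset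

namespace Matrix.IsHermitian

variable {n 𝕜 : Type*} [RCLike 𝕜] [Fintype n] [DecidableEq n] {A : Matrix n n 𝕜}

lemma trace_cfc (hA : A.IsHermitian) (f : ℝ → ℝ) :
    (cfc f A).trace = ∑ i, (f (hA.eigenvalues i) : 𝕜) := by
  rw [hA.cfc_eq, IsHermitian.cfc, Unitary.conjStarAlgAut_apply, trace_mul_cycle,
    Unitary.coe_star_mul_self, one_mul, trace_diagonal]
  rfl

lemma inv_add_smul_one_eq_cfc (hA : A.IsHermitian) {s : ℝ}
    (hs : ∀ i, hA.eigenvalues i + s ≠ 0) :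
    (A + s • (1 : Matrix n n 𝕜))⁻¹ = cfc (fun x ↦ (x + s)⁻¹) A := by
  have hspec : ∀ x ∈ spectrum ℝ A, x + s ≠ 0 := by
    rw [hA.spectrum_real_eq_range_eigenvalues]
    rintro - ⟨i, rfl⟩
    exact hs i
  rw [cfc_inv (fun x ↦ x + s) A hspec, cfc_add_const s (fun x ↦ x) A, cfc_id' ℝ A,
    nonsing_inv_eq_ringInverse, Algebra.algebraMap_eq_smul_one]

lemma trace_inv_add_smul_one (hA : A.IsHermitian) {s : ℝ}
    (hs : ∀ i, hA.eigenvalues i + s ≠ 0) :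
    (A + s • (1 : Matrix n n 𝕜))⁻¹.trace = ∑ i, (((hA.eigenvalues i + s)⁻¹ : ℝ) : 𝕜) := by
  rw [hA.inv_add_smul_one_eq_cfc hs, hA.trace_cfc]

end Matrix.IsHermitian

section

variable {ι : Type*} [Fintype ι] {x : ι → ℝ} {c : ℝ}

lemma sum_mul_sum_inv_add_le_card_div (hx : ∀ i, 0 ≤ x i) (hT : 0 < ∑ i, x i) (hc : 0 < c) :
    (∑ i, x i) * ∑ i, (x i + c * ∑ j, x j)⁻¹ ≤ Fintype.card ι / c := by
  set T := ∑ i, x i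
  have hcT : 0 < c * T := mul_pos hc hT
  calc T * ∑ i, (x i + c * T)⁻¹ ≤ T * ∑ _i : ι, (c * T)⁻¹ := by
        gcongr with i
        linarith [hx i]
    _ = Fintype.card ι / c := by
        rw [sum_const, card_univ, nsmul_eq_mul]
        field_simp

lemma card_sq_div_le_sum_mul_sum_inv_add (hx : ∀ i, 0 ≤ x i) (hT : 0 < ∑ i, x i) (hc : 0 < c) :
    (Fintype.card ι : ℝ) ^ 2 / (1 + c * Fintype.card ι) ≤
      (∑ i, x i) * ∑ i, (x i + c * ∑ j, x j)⁻¹ := by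
  set T := ∑ i, x i
  have hcT : 0 < c * T := mul_pos hc hT
  have hsum : ∑ i, (x i + c * T) = T * (1 + c * Fintype.card ι) := by
    rw [sum_add_distrib, sum_const, card_univ, nsmul_eq_mul]
    ring
  have hCS := sq_sum_div_le_sum_sq_div univ (fun _ ↦ (1 : ℝ)) (g := fun i ↦ x i + c * T)
    fun i _ ↦ by linarith [hx i]
  simp only [sum_const, card_univ, nsmul_eq_mul, mul_one, one_pow, one_div, hsum] at hCS
  calc (Fintype.card ι : ℝ) ^ 2 / (1 + c * Fintype.card ι)
      = T * ((Fintype.card ι : ℝ) ^ 2 / (T * (1 + c * Fintype.card ι))) := by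
        field_simp
    _ ≤ T * ∑ i, (x i + c * T)⁻¹ := by gcongr

end

theorem trace_V_trace_W_bounds_general (p : ℕ) (W : Matrix (Fin p) (Fin p) ℝ)
    (hW : W.PosSemidef) (htr : 0 < W.trace) (c : ℝ) (hc : 0 < c)
    (V : Matrix (Fin p) (Fin p) ℝ) (hV : V = (W + (c * W.trace) • 1)⁻¹) :
    (p : ℝ) ^ 2 / (1 + c * p) ≤ V.trace * W.trace ∧ V.trace * W.trace ≤ p / c := by
  have hμ : ∀ i, 0 ≤ hW.1.eigenvalues i := hW.eigenvalues_nonneg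
  have htr_eq : W.trace = ∑ i, hW.1.eigenvalues i := by
    simpa using hW.1.trace_eq_sum_eigenvalues
  have hs : ∀ i, hW.1.eigenvalues i + c * W.trace ≠ 0 := fun i ↦
    (add_pos_of_nonneg_of_pos (hμ i) (mul_pos hc htr)).ne'
  have hVtr : V.trace = ∑ i, (hW.1.eigenvalues i + c * W.trace)⁻¹ := by
    rw [hV, hW.1.trace_inv_add_smul_one hs]
    rfl
  rw [htr_eq] at htr
  have hlower := card_sq_div_le_sum_mul_sum_inv_add hμ htr hc
  have hupper := sum_mul_sum_inv_add_le_card_div hμ htr hc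
  rw [Fintype.card_fin] at hlower hupper
  rw [mul_comm V.trace, hVtr, htr_eq]
  exact ⟨hlower, hupper⟩

/-- With `V = (W + c·(tr W)·I_p)⁻¹`, one has `p²/(1 + c p) ≤ tr(V)·tr(W) ≤ p/c`. -/
theorem trace_V_trace_W_bounds (p : ℕ) (hp : 1 ≤ p) (W : Matrix (Fin p) (Fin p) ℝ)
    (hW : W.PosSemidef) (htr : 0 < W.trace) (c : ℝ) (hc : 0 < c)
    (V : Matrix (Fin p) (Fin p) ℝ) (hV : V = (W + (c * W.trace) • 1)⁻¹) :
    (p : ℝ) ^ 2 / (1 + c * p) ≤ V.trace * W.trace ∧ V.trace * W.trace ≤ p / c :=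
  trace_V_trace_W_bounds_general p W hW htr c hc V hV
end

section
/- With V = (W + c·(tr W)·I_p)⁻¹, one has tr(V² W) ≤ tr(V)/(1 + c p), and hence tr(V² W) ≤ tr(V). -/
/-!
Put `A = W + s • 1` with `s = c · tr W`, so that `V = A⁻¹` and `V W = 1 - s V`; hence
`tr (V² W) = tr V - s · tr V²`, and since `tr A = tr W · (1 + c p)` the claim reduces to
`p · tr A⁻¹ ≤ tr A · tr A⁻²` for positive definite `A`. This follows from two instances of the
Cauchy–Schwarz inequality `tr (X Y)² ≤ tr X² · tr Y²` for symmetric `X`, `Y`: with `X = 1` it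
gives `(tr A⁻¹)² ≤ p · tr A⁻²`, and with `X = A^{1/2}`, `Y = A^{-1/2}` it gives
`p² ≤ tr A · tr A⁻¹`.
-/

open Matrix
open scoped MatrixOrder

namespace Matrix

variable {n : Type*} [Fintype n]

theorem trace_mul_sq_le_of_isHermitian {X Y : Matrix n n ℝ} (hX : X.IsHermitian)
    (hY : Y.IsHermitian) : (X * Y).trace ^ 2 ≤ (X * X).trace * (Y * Y).trace := by
  have trace_mul_eq {A B : Matrix n n ℝ} (hB : B.IsHermitian) :
      (A * B).trace = ∑ ij : n × n, A ij.1 ij.2 * B ij.1 ij.2 := by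
    rw [Fintype.sum_prod_type]
    refine Finset.sum_congr rfl fun i _ => Finset.sum_congr rfl fun j _ => ?_
    simp only [← hB.apply i j, star_trivial]
  rw [trace_mul_eq hY, trace_mul_eq hX, trace_mul_eq hY]
  simpa only [sq] using Finset.sum_mul_sq_le_sq_mul_sq Finset.univ _ _

theorem sq_trace_le_card_mul_trace_mul_self [DecidableEq n] {X : Matrix n n ℝ}
    (hX : X.IsHermitian) : X.trace ^ 2 ≤ Fintype.card n * (X * X).trace := by
  simpa using trace_mul_sq_le_of_isHermitian isHermitian_one hX

theorem PosDef.card_sq_le_trace_mul_trace_inv [DecidableEq n] {A : Matrix n n ℝ}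
    (hA : A.PosDef) : (Fintype.card n : ℝ) ^ 2 ≤ A.trace * A⁻¹.trace := by
  set X := CFC.sqrt A
  have hXX : X * X = A := CFC.sqrt_mul_sqrt_self A hA.posSemidef.nonneg
  have hX : X.IsHermitian := (CFC.sqrt_nonneg A).posSemidef.isHermitian
  have hXdet : IsUnit X.det := by
    have : IsUnit (X * X).det := hXX ▸ hA.isUnit.map detMonoidHom
    simpa [det_mul] using this
  have := trace_mul_sq_le_of_isHermitian hX hX.inv
  rwa [mul_nonsing_inv X hXdet, ← mul_inv_rev, hXX, trace_one] at this

theorem PosDef.card_mul_trace_inv_le [DecidableEq n] {A : Matrix n n ℝ} (hA : A.PosDef) :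
    Fintype.card n * A⁻¹.trace ≤ A.trace * (A⁻¹ * A⁻¹).trace := by
  have hA_tr : 0 ≤ A.trace := hA.posSemidef.trace_nonneg
  have hAinv_tr : 0 ≤ A⁻¹.trace := hA.inv.posSemidef.trace_nonneg
  have hAinv_sq_tr : 0 ≤ (A⁻¹ * A⁻¹).trace := by
    simpa [sq] using (hA.inv.posSemidef.pow 2).trace_nonneg
  have h_card_sq := hA.card_sq_le_trace_mul_trace_inv
  have h_inv_sq := sq_trace_le_card_mul_trace_mul_self hA.inv.isHermitian
  rcases hAinv_tr.eq_or_lt with h_zero | h_pos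
  · rw [← h_zero, mul_zero]
    exact mul_nonneg hA_tr hAinv_sq_tr
  refine le_of_mul_le_mul_right ?_ h_pos
  calc (Fintype.card n : ℝ) * A⁻¹.trace * A⁻¹.trace
      = Fintype.card n * A⁻¹.trace ^ 2 := by ring
    _ ≤ Fintype.card n * (Fintype.card n * (A⁻¹ * A⁻¹).trace) := by gcongr
    _ = (Fintype.card n : ℝ) ^ 2 * (A⁻¹ * A⁻¹).trace := by ring
    _ ≤ A.trace * A⁻¹.trace * (A⁻¹ * A⁻¹).trace := by gcongr
    _ = A.trace * (A⁻¹ * A⁻¹).trace * A⁻¹.trace := by ring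

end Matrix

theorem trace_V2W_bounds_general (p : ℕ) (W : Matrix (Fin p) (Fin p) ℝ)
    (hW : W.PosSemidef) (htr : 0 < W.trace) (c : ℝ) (hc : 0 < c)
    (V : Matrix (Fin p) (Fin p) ℝ) (hV : V = (W + (c * W.trace) • 1)⁻¹) :
    (V * V * W).trace ≤ V.trace / (1 + c * p) ∧ (V * V * W).trace ≤ V.trace := by
  set s := c * W.trace
  set A := W + s • (1 : Matrix (Fin p) (Fin p) ℝ)
  have hA : A.PosDef := PosDef.posSemidef_add hW (PosDef.one.smul (mul_pos hc htr))
  have hA_tr : A.trace = W.trace * (1 + c * p) := by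
    simp only [A, s, trace_add, trace_smul, trace_one, Fintype.card_fin, smul_eq_mul]
    ring
  have hVW : V * W = 1 - s • V := by
    rw [hV, show W = A - s • 1 by simp [A], mul_sub, nonsing_inv_mul A hA.det_pos.ne'.isUnit,
      Matrix.mul_smul, mul_one]
  have key := hA.card_mul_trace_inv_le
  rw [← hV, hA_tr, Fintype.card_fin] at key
  have hcp : 0 < 1 + c * p := by positivity
  have bound : (V * V * W).trace ≤ V.trace / (1 + c * p) := by
    rw [mul_assoc, hVW, mul_sub, mul_one, Matrix.mul_smul, trace_sub, trace_smul, smul_eq_mul,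
      le_div_iff₀ hcp]
    nlinarith [mul_le_mul_of_nonneg_left key hc.le]
  have hV_tr : 0 ≤ V.trace := hV ▸ hA.inv.posSemidef.trace_nonneg
  exact ⟨bound, bound.trans (div_le_self hV_tr (le_add_of_nonneg_right (by positivity)))⟩

/-- With `V = (W + c·(tr W)·I_p)⁻¹`, one has `tr(V² W) ≤ tr(V)/(1 + c p)`, and hence
`tr(V² W) ≤ tr(V)`. -/
theorem trace_V2W_bounds (p : ℕ) (hp : 1 ≤ p) (W : Matrix (Fin p) (Fin p) ℝ)
    (hW : W.PosSemidef) (htr : 0 < W.trace) (c : ℝ) (hc : 0 < c)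
    (V : Matrix (Fin p) (Fin p) ℝ) (hV : V = (W + (c * W.trace) • 1)⁻¹) :
    (V * V * W).trace ≤ V.trace / (1 + c * p) ∧ (V * V * W).trace ≤ V.trace :=
  trace_V2W_bounds_general p W hW htr c hc V hV
end

section
/- With V = (W + c·(tr W)·I_p)⁻¹, one has the two upper bounds tr(V³ W) ≤ tr(V²)/(1 + c p) ≤ (tr V)²/(1 + c p), and tr(V³ W) ≤ tr(V² W)·tr(V). -/
open Matrix

private lemma scalar_aux (p : ℕ) (hp : 1 ≤ p) (c t s : ℝ) (hc : 0 < c) (ht : 0 < t)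
    (hsdef : s = c * t) (μ v : Fin p → ℝ) (hμ0 : ∀ i, 0 ≤ μ i) (hv0 : ∀ i, 0 < v i)
    (hdv : ∀ i, (μ i + s) * v i = 1) (hsum : ∑ i, (μ i + s) = t * (1 + c * p)) :
    ((∑ i, μ i * v i ^ 3) ≤ (∑ i, v i ^ 2) / (1 + c * p) ∧
      (∑ i, v i ^ 2) / (1 + c * p) ≤ (∑ i, v i) ^ 2 / (1 + c * p)) ∧
    (∑ i, μ i * v i ^ 3) ≤ (∑ i, μ i * v i ^ 2) * (∑ i, v i) := by
  have hs : 0 < s := hsdef ▸ mul_pos hc ht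
  have hp0 : (0:ℝ) < p := by exact_mod_cast hp
  have hcp : (0:ℝ) < 1 + c * p := by positivity
  set A := ∑ i, v i with hA
  set B := ∑ i, v i ^ 2 with hB
  set C := ∑ i, v i ^ 3 with hC
  have hA0 : 0 < A := Finset.sum_pos (fun i _ => hv0 i) ⟨⟨0, hp⟩, Finset.mem_univ _⟩
  have hB0 : 0 < B := Finset.sum_pos (fun i _ => pow_pos (hv0 i) 2) ⟨⟨0, hp⟩, Finset.mem_univ _⟩
  have hC0 : 0 < C := Finset.sum_pos (fun i _ => pow_pos (hv0 i) 3) ⟨⟨0, hp⟩, Finset.mem_univ _⟩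
  have hμv : ∀ i, μ i * v i ^ 3 = v i ^ 2 - s * v i ^ 3 := fun i => by
    linear_combination (v i ^ 2) * (hdv i)
  have hμv2 : ∀ i, μ i * v i ^ 2 = v i - s * v i ^ 2 := fun i => by
    linear_combination (v i) * (hdv i)
  have hL : ∑ i, μ i * v i ^ 3 = B - s * C := by
    rw [hB, hC, Finset.mul_sum, ← Finset.sum_sub_distrib]
    exact Finset.sum_congr rfl fun i _ => hμv i
  have cheb : B * A ≤ p * C := by
    have hmono : Monovary (fun i => v i ^ 2) v :=
      fun i j hij => pow_le_pow_left₀ (hv0 i).le hij.le 2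
    have h := hmono.sum_mul_sum_le_card_mul_sum
    simp only [Fintype.card_fin] at h
    have h5 : ∑ i, v i ^ 2 * v i = C := by
      rw [hC]; exact Finset.sum_congr rfl fun i _ => by ring
    rw [h5] at h
    exact h
  have amhm : (p:ℝ)^2 ≤ A * (t * (1 + c * p)) := by
    rw [hA, ← hsum]
    have h := Finset.sum_sq_le_sum_mul_sum_of_sq_eq_mul Finset.univ
      (f := v) (g := fun i => μ i + s) (r := fun _ => 1)
      (fun i _ => (hv0 i).le) (fun i _ => (add_pos_of_nonneg_of_pos (hμ0 i) hs).le)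
      (fun i _ => by rw [one_pow, ← hdv i]; ring)
    simpa using h
  refine ⟨⟨?_, ?_⟩, ?_⟩
  · rw [hL, le_div_iff₀ hcp]
    have key : c * p * B ≤ (1 + c * p) * s * C := by
      have h1 : (p:ℝ)^2 * B ≤ A * (t * (1 + c*p)) * B :=
        mul_le_mul_of_nonneg_right amhm hB0.le
      have h2 : B * A * (t * (1 + c*p)) ≤ ↑p * C * (t * (1 + c*p)) :=
        mul_le_mul_of_nonneg_right cheb (by positivity)
      have h4 : (p:ℝ) * ((p:ℝ) * B) ≤ (p:ℝ) * (C * (t * (1 + c*p))) := by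
        nlinarith [h1, h2]
      have h3 := le_of_mul_le_mul_left h4 hp0
      calc c * ↑p * B = c * ((p:ℝ) * B) := by ring
        _ ≤ c * (C * (t * (1 + c*p))) := by nlinarith [h3, hc]
        _ = (1 + c*↑p) * (c * t) * C := by ring
        _ = (1 + c*↑p) * s * C := by rw [hsdef]
    nlinarith [key]
  · gcongr
    calc B = ∑ i, v i ^ 2 := hB
      _ ≤ (∑ i, v i) ^ 2 := Finset.sum_sq_le_sq_sum_of_nonneg fun i _ => (hv0 i).le
      _ = A ^ 2 := by rw [hA]
  · rw [hL]
    have hR : ∑ i, μ i * v i ^ 2 = A - s * B := by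
      rw [hA, hB, Finset.mul_sum, ← Finset.sum_sub_distrib]
      exact Finset.sum_congr rfl fun i _ => hμv2 i
    rw [hR]
    have key : s * (B * A - C) ≤ A * A - B := by
      have expand : B * A - C = ∑ i, v i ^ 2 * (A - v i) := by
        rw [hB, hC, Finset.sum_mul, ← Finset.sum_sub_distrib]
        exact Finset.sum_congr rfl fun i _ => by ring
      have expand2 : A * A - B = ∑ i, v i * (A - v i) := by
        conv_lhs => rw [hA, hB]
        rw [Finset.sum_mul, ← Finset.sum_sub_distrib]
        exact Finset.sum_congr rfl fun i _ => by ring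
      rw [expand, expand2, Finset.mul_sum]
      apply Finset.sum_le_sum
      intro i _
      have hvA : v i ≤ A := by
        rw [hA]; exact Finset.single_le_sum (fun j _ => (hv0 j).le) (Finset.mem_univ i)
      have hsv : s * v i ≤ 1 := by
        nlinarith [hdv i, mul_nonneg (hμ0 i) (hv0 i).le]
      have hfac : 0 ≤ (1 - s * v i) * (v i * (A - v i)) :=
        mul_nonneg (by linarith) (mul_nonneg (hv0 i).le (by linarith))
      nlinarith [hfac]
    nlinarith [key]


/-- With `V = (W + c·(tr W)·I_p)⁻¹`, one has
`tr(V³ W) ≤ tr(V²)/(1 + c p) ≤ (tr V)²/(1 + c p)` and `tr(V³ W) ≤ tr(V² W)·tr(V)`. -/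
theorem trace_V3W_bounds (p : ℕ) (hp : 1 ≤ p) (W : Matrix (Fin p) (Fin p) ℝ)
    (hW : W.PosSemidef) (htr : 0 < W.trace) (c : ℝ) (hc : 0 < c)
    (V : Matrix (Fin p) (Fin p) ℝ) (hV : V = (W + (c * W.trace) • 1)⁻¹) :
    ((V * V * V * W).trace ≤ (V * V).trace / (1 + c * p) ∧
      (V * V).trace / (1 + c * p) ≤ V.trace ^ 2 / (1 + c * p)) ∧
    (V * V * V * W).trace ≤ (V * V * W).trace * V.trace := by
  classical
  have hH : W.IsHermitian := hW.1
  set s : ℝ := c * W.trace with hsdef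
  have hs : 0 < s := mul_pos hc htr
  set U : Matrix (Fin p) (Fin p) ℝ := (hH.eigenvectorUnitary : Matrix (Fin p) (Fin p) ℝ) with hU
  have hUU : star U * U = 1 := (Matrix.mem_unitaryGroup_iff').mp hH.eigenvectorUnitary.2
  have hUU' : U * star U = 1 := (Matrix.mem_unitaryGroup_iff).mp hH.eigenvectorUnitary.2
  set μ : Fin p → ℝ := hH.eigenvalues with hμ
  have hμ0 : ∀ i, 0 ≤ μ i := fun i => hW.eigenvalues_nonneg i
  have hspec : W = U * diagonal μ * star U := by
    have := hH.spectral_theorem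
    rwa [RCLike.ofReal_real_eq_id, Function.id_comp] at this
  set D : (Fin p → ℝ) → Matrix (Fin p) (Fin p) ℝ := fun f => U * diagonal f * star U with hD
  have hDmul : ∀ f g, D f * D g = D (fun i => f i * g i) := by
    intro f g
    simp only [hD, mul_assoc]
    rw [← mul_assoc (star U) U, hUU, one_mul, ← mul_assoc (diagonal f), diagonal_mul_diagonal]
  have hDtr : ∀ f, (D f).trace = ∑ i, f i := by
    intro f
    rw [hD, trace_mul_cycle, hUU, one_mul, trace_diagonal]
  have hDone : D (fun _ => 1) = 1 := by
    simp only [hD, diagonal_one, mul_one, hUU']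
  have hd : ∀ i, 0 < μ i + s := fun i => add_pos_of_nonneg_of_pos (hμ0 i) hs
  set v : Fin p → ℝ := fun i => (μ i + s)⁻¹ with hv
  have hv0 : ∀ i, 0 < v i := fun i => inv_pos.mpr (hd i)
  have hdv : ∀ i, (μ i + s) * v i = 1 := fun i => mul_inv_cancel₀ (hd i).ne'
  have hWs : W + s • 1 = D (fun i => μ i + s) := by
    rw [hD]
    have h1 : (s : ℝ) • (1 : Matrix (Fin p) (Fin p) ℝ) = U * diagonal (fun _ => s) * star U := by
      rw [← smul_one_eq_diagonal, Matrix.mul_smul, mul_one, Matrix.smul_mul, hUU']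
    rw [hspec, h1, ← add_mul, ← mul_add, diagonal_add]
  have hVD : V = D v := by
    rw [hV, hWs]
    apply inv_eq_right_inv
    rw [hDmul]
    rw [show (fun i => (μ i + s) * v i) = fun _ => 1 from funext hdv, hDone]
  have hWD : W = D μ := hspec
  have trV : V.trace = ∑ i, v i := by rw [hVD, hDtr]
  have trV2 : (V * V).trace = ∑ i, v i ^ 2 := by
    rw [hVD, hDmul, hDtr]; exact Finset.sum_congr rfl fun i _ => (sq (v i)).symm
  have trV3W : (V * V * V * W).trace = ∑ i, μ i * v i ^ 3 := by
    rw [hVD, hWD, hDmul, hDmul, hDmul, hDtr]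
    exact Finset.sum_congr rfl fun i _ => by ring
  have trV2W : (V * V * W).trace = ∑ i, μ i * v i ^ 2 := by
    rw [hVD, hWD, hDmul, hDmul, hDtr]
    exact Finset.sum_congr rfl fun i _ => by ring
  have hsumd : ∑ i, (μ i + s) = W.trace * (1 + c * p) := by
    rw [Finset.sum_add_distrib, Finset.sum_const, Finset.card_univ, Fintype.card_fin]
    have h3 : W.trace = ∑ i, μ i := by
      conv_lhs => rw [hWD]
      rw [hDtr]
    rw [← h3, hsdef]
    ring
  rw [trV, trV2, trV3W, trV2W]
  exact scalar_aux p hp c W.trace s hc htr hsdef μ v hμ0 hv0 hdv hsumd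
end

section
/- With V = (W + c·(tr W)·I_p)⁻¹, one has tr(V²) ≤ (tr V)²·(1 − (p − 1)c/(p(1 + c))). -/
open Matrix

/-- Scalar core inequality: if `lam i ≥ 0` sum to `T > 0`, `c > 0`, and
`ν i = (lam i + c T)⁻¹`, then `∑ ν² ≤ (∑ ν)² (1 − (p−1)c/(p(1+c)))`. -/
lemma scalar_key (p : ℕ) (hp : 1 ≤ p) (lam : Fin p → ℝ) (h0 : ∀ i, 0 ≤ lam i)
    (c T : ℝ) (hc : 0 < c) (hT : 0 < T) (hsum : ∑ i, lam i = T) :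
    ∑ i, ((lam i + c * T)⁻¹) ^ 2 ≤
      (∑ i, (lam i + c * T)⁻¹) ^ 2 * (1 - ((p : ℝ) - 1) * c / (p * (1 + c))) := by
  set ν : Fin p → ℝ := fun i => (lam i + c * T)⁻¹ with hν
  have hcT : 0 < c * T := mul_pos hc hT
  have hden : ∀ i, 0 < lam i + c * T := fun i => by
    have := h0 i; linarith
  have hνpos : ∀ i, 0 < ν i := fun i => inv_pos.mpr (hden i)
  set m : ℝ := ((1 + c) * T)⁻¹ with hm
  set M : ℝ := (c * T)⁻¹ with hM
  have hmpos : 0 < m := inv_pos.mpr (by nlinarith)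
  have hMpos : 0 < M := inv_pos.mpr hcT
  have hlamle : ∀ i, lam i ≤ T := by
    intro i
    rw [← hsum]
    exact Finset.single_le_sum (fun j _ => h0 j) (Finset.mem_univ i)
  have hνleM : ∀ i, ν i ≤ M := fun i => by
    apply inv_anti₀ hcT
    have := h0 i; linarith
  have hmleν : ∀ i, m ≤ ν i := fun i => by
    apply inv_anti₀ (hden i)
    have := hlamle i; nlinarith
  set s : ℝ := ∑ i, ν i with hs
  have hspos : 0 < s := Finset.sum_pos (fun i _ => hνpos i) ⟨⟨0, hp⟩, Finset.mem_univ _⟩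
  have hsleM : s ≤ (p : ℝ) * M := by
    calc s ≤ ∑ _i : Fin p, M := Finset.sum_le_sum (fun i _ => hνleM i)
    _ = (p : ℝ) * M := by simp [mul_comm]
  -- each ν i ≤ s − (p−1) m
  have hstep : ∀ i, ν i ≤ s - ((p : ℝ) - 1) * m := by
    intro i
    have hsplit : s = ν i + ∑ j ∈ Finset.univ.erase i, ν j :=
      (Finset.add_sum_erase _ ν (Finset.mem_univ i)).symm
    have hcard : (Finset.univ.erase i).card = p - 1 := by
      rw [Finset.card_erase_of_mem (Finset.mem_univ i), Finset.card_univ, Fintype.card_fin]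
    have hrest : ((p : ℝ) - 1) * m ≤ ∑ j ∈ Finset.univ.erase i, ν j := by
      calc ((p : ℝ) - 1) * m = ((p - 1 : ℕ) : ℝ) * m := by
            rw [Nat.cast_sub hp]; norm_num
      _ = ∑ _j ∈ Finset.univ.erase i, m := by rw [Finset.sum_const, hcard, nsmul_eq_mul]
      _ ≤ ∑ j ∈ Finset.univ.erase i, ν j :=
            Finset.sum_le_sum (fun j _ => hmleν j)
    linarith
  -- sum of squares bound
  have hsq : ∑ i, (ν i) ^ 2 ≤ (s - ((p : ℝ) - 1) * m) * s := by
    calc ∑ i, (ν i) ^ 2 ≤ ∑ i, (s - ((p : ℝ) - 1) * m) * ν i := by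
          apply Finset.sum_le_sum
          intro i _
          have := hstep i
          have := (hνpos i).le
          nlinarith
    _ = (s - ((p : ℝ) - 1) * m) * s := by rw [← Finset.mul_sum]
  have hp1 : (1 : ℝ) ≤ (p : ℝ) := by exact_mod_cast hp
  have hd : (0 : ℝ) < (p : ℝ) * (1 + c) := by nlinarith
  have hmT : m * ((1 + c) * T) = 1 := inv_mul_cancel₀ (by nlinarith)
  have hMT : M * (c * T) = 1 := inv_mul_cancel₀ (ne_of_gt hcT)
  -- c * s * T ≤ p
  have hcsT : c * s * T ≤ (p : ℝ) := by
    have h1 : c * T * s ≤ c * T * ((p : ℝ) * M) :=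
      mul_le_mul_of_nonneg_left hsleM hcT.le
    have h2 : c * T * ((p : ℝ) * M) = (p : ℝ) := by nlinarith
    nlinarith
  -- (p(1+c)) * m * T = p
  have hpm : ((p : ℝ) * (1 + c)) * m * T = (p : ℝ) := by nlinarith
  have hfinal : (s - ((p : ℝ) - 1) * m) * s ≤
      s ^ 2 * (1 - ((p : ℝ) - 1) * c / ((p : ℝ) * (1 + c))) := by
    have heq : (1 : ℝ) - ((p : ℝ) - 1) * c / ((p : ℝ) * (1 + c)) =
        (((p : ℝ) * (1 + c)) - ((p : ℝ) - 1) * c) / ((p : ℝ) * (1 + c)) := by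
      field_simp
    rw [heq, mul_div_assoc', le_div_iff₀ hd]
    nlinarith [mul_le_mul_of_nonneg_left hcsT
        (mul_nonneg (sub_nonneg.mpr hp1) hspos.le), hpm, hT, hspos,
      mul_pos hspos hT, mul_nonneg (sub_nonneg.mpr hp1) hspos.le]
  show ∑ i, (ν i) ^ 2 ≤ (∑ i, ν i) ^ 2 * (1 - ((p : ℝ) - 1) * c / ((p : ℝ) * (1 + c)))
  calc ∑ i, (ν i) ^ 2 ≤ (s - ((p : ℝ) - 1) * m) * s := hsq
  _ ≤ s ^ 2 * (1 - ((p : ℝ) - 1) * c / ((p : ℝ) * (1 + c))) := hfinal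

/-- With `V = (W + c·(tr W)·I_p)⁻¹`, one has
`tr(V²) ≤ (tr V)²·(1 − (p − 1)c/(p(1 + c)))`. -/
theorem trace_V2_bound (p : ℕ) (hp : 1 ≤ p) (W : Matrix (Fin p) (Fin p) ℝ)
    (hW : W.PosSemidef) (htr : 0 < W.trace) (c : ℝ) (hc : 0 < c)
    (V : Matrix (Fin p) (Fin p) ℝ) (hV : V = (W + (c * W.trace) • 1)⁻¹) :
    (V * V).trace ≤ V.trace ^ 2 * (1 - ((p : ℝ) - 1) * c / (p * (1 + c))) := by
  set T : ℝ := W.trace with hT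
  have hWh : W.IsHermitian := hW.1
  set U : Matrix (Fin p) (Fin p) ℝ := (hWh.eigenvectorUnitary : Matrix (Fin p) (Fin p) ℝ)
    with hU
  set lam : Fin p → ℝ := hWh.eigenvalues with hlam
  have hUU : U * star U = 1 :=
    (Matrix.mem_unitaryGroup_iff).mp (hWh.eigenvectorUnitary).2
  have hUU' : star U * U = 1 :=
    (Matrix.mem_unitaryGroup_iff').mp (hWh.eigenvectorUnitary).2
  have hspec : W = U * Matrix.diagonal lam * star U := by
    have := hWh.spectral_theorem
    simpa [RCLike.ofReal_real_eq_id] using this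
  have h0 : ∀ i, 0 ≤ lam i := hW.eigenvalues_nonneg
  have hcancel : ∀ B : Matrix (Fin p) (Fin p) ℝ, star U * (U * B) = B := fun B => by
    rw [← Matrix.mul_assoc, hUU', Matrix.one_mul]
  have htrconj : ∀ d : Fin p → ℝ,
      (U * Matrix.diagonal d * star U).trace = ∑ i, d i := fun d => by
    rw [Matrix.trace_mul_cycle, hUU', Matrix.one_mul, Matrix.trace_diagonal]
  -- trace of W is sum of eigenvalues
  have htrW : T = ∑ i, lam i := by
    rw [hT]
    conv_lhs => rw [hspec]
    exact htrconj lam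
  have hden : ∀ i, 0 < lam i + c * T := fun i => by
    have := h0 i; nlinarith [mul_pos hc htr]
  set ν : Fin p → ℝ := fun i => (lam i + c * T)⁻¹ with hν
  have h1 : U * Matrix.diagonal (fun _ : Fin p => c * T) * star U
      = (c * T) • (1 : Matrix (Fin p) (Fin p) ℝ) := by
    rw [← Matrix.smul_one_eq_diagonal, Matrix.mul_smul, Matrix.mul_one,
      Matrix.smul_mul, hUU]
  have hA : W + (c * T) • (1 : Matrix (Fin p) (Fin p) ℝ)
      = U * Matrix.diagonal (fun i => lam i + c * T) * star U := by
    rw [← h1]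
    conv_lhs => rw [hspec]
    rw [← Matrix.add_mul, ← Matrix.mul_add, Matrix.diagonal_add]
  have hone : Matrix.diagonal (fun i => (lam i + c * T) * ν i)
      = (1 : Matrix (Fin p) (Fin p) ℝ) := by
    have : (fun i => (lam i + c * T) * ν i) = fun _ : Fin p => (1 : ℝ) := by
      funext i
      exact mul_inv_cancel₀ (ne_of_gt (hden i))
    rw [this, Matrix.diagonal_one]
  -- V = U * diagonal ν * star U
  have hVform : V = U * Matrix.diagonal ν * star U := by
    rw [hV]
    apply Matrix.inv_eq_right_inv
    rw [hA]
    calc U * Matrix.diagonal (fun i => lam i + c * T) * star U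
          * (U * Matrix.diagonal ν * star U)
        = U * (Matrix.diagonal (fun i => lam i + c * T)
            * (star U * (U * (Matrix.diagonal ν * star U)))) := by
          simp only [Matrix.mul_assoc]
    _ = U * (Matrix.diagonal (fun i => lam i + c * T)
            * (Matrix.diagonal ν * star U)) := by rw [hcancel]
    _ = U * (Matrix.diagonal (fun i => lam i + c * T) * Matrix.diagonal ν) * star U := by
          simp only [Matrix.mul_assoc]
    _ = 1 := by rw [Matrix.diagonal_mul_diagonal, hone, Matrix.mul_one, hUU]
  -- traces
  have htrV : V.trace = ∑ i, ν i := by rw [hVform]; exact htrconj ν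
  have htrV2 : (V * V).trace = ∑ i, (ν i) ^ 2 := by
    have hVV : V * V = U * Matrix.diagonal (fun i => ν i * ν i) * star U := by
      rw [hVform]
      calc U * Matrix.diagonal ν * star U * (U * Matrix.diagonal ν * star U)
          = U * (Matrix.diagonal ν * (star U * (U * (Matrix.diagonal ν * star U)))) := by
            simp only [Matrix.mul_assoc]
      _ = U * (Matrix.diagonal ν * (Matrix.diagonal ν * star U)) := by rw [hcancel]
      _ = U * (Matrix.diagonal ν * Matrix.diagonal ν) * star U := by
            simp only [Matrix.mul_assoc]
      _ = U * Matrix.diagonal (fun i => ν i * ν i) * star U := by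
            rw [Matrix.diagonal_mul_diagonal]
    rw [hVV, htrconj]
    exact Finset.sum_congr rfl (fun i _ => (sq (ν i)).symm)
  rw [htrV, htrV2]
  exact scalar_key p hp lam h0 c T hc htr htrW.symm
end

section
/- With V = (W + c·(tr W)·I_p)⁻¹, one has tr(V³ W) ≤ tr(V² W)·tr(V)·(1 − (p − 1)c/(p(1 + c))). -/
/-!
Conjugating by the eigenvector unitary of `W` turns `W` into `diagonal l` and `V` into
`diagonal b` with `b i = (l i + c s)⁻¹`, where `l i ≥ 0` are the eigenvalues and `s = ∑ l i`.
The claim then follows termwise from `b i ≤ κ ∑ j, b j`, `κ = 1 - (p - 1)c / (p(1 + c))`,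
which holds because `0 ≤ l j ≤ s` confines every `b j` to `[((1 + c)s)⁻¹, (c s)⁻¹]`.
-/

open Matrix Finset Unitary

section UnitaryConjugation

variable {n R : Type*} [Fintype n] [DecidableEq n] [CommRing R] [StarRing R]

theorem Matrix.trace_conjStarAlgAut_s7 (u : unitary (Matrix n n R)) (A : Matrix n n R) :
    (conjStarAlgAut R _ u A).trace = A.trace := by
  rw [conjStarAlgAut_apply, trace_mul_cycle, Unitary.coe_star_mul_self, Matrix.one_mul]

theorem Matrix.conjStarAlgAut_inv (u : unitary (Matrix n n R)) (A : Matrix n n R) :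
    conjStarAlgAut R _ u A⁻¹ = (conjStarAlgAut R _ u A)⁻¹ := by
  have hu : (u : Matrix n n R)⁻¹ = star (u : Matrix n n R) :=
    inv_eq_left_inv (Unitary.coe_star_mul_self u)
  have hu' : (star u : Matrix n n R)⁻¹ = u := inv_eq_left_inv (Unitary.coe_mul_star_self u)
  rw [conjStarAlgAut_apply, conjStarAlgAut_apply, Matrix.mul_inv_rev, Matrix.mul_inv_rev, hu, hu',
    Matrix.mul_assoc]

end UnitaryConjugation

theorem Matrix.inv_diagonal_of_ne_zero {n K : Type*} [Fintype n] [DecidableEq n] [Field K]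
    {d : n → K} (hd : ∀ i, d i ≠ 0) : (diagonal d)⁻¹ = diagonal d⁻¹ := by
  refine inv_eq_left_inv ?_
  rw [diagonal_mul_diagonal, ← diagonal_one]
  exact congrArg diagonal (funext fun i => inv_mul_cancel₀ (hd i))

theorem inv_add_le_mul_sum_inv {ι : Type*} [Fintype ι] {l : ι → ℝ} (hl : ∀ i, 0 ≤ l i)
    (hs : 0 < ∑ j, l j) {c : ℝ} (hc : 0 < c) (i : ι) :
    (l i + c * ∑ j, l j)⁻¹ ≤ (1 - ((Fintype.card ι : ℝ) - 1) * c / (Fintype.card ι * (1 + c))) *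
      ∑ j, (l j + c * ∑ k, l k)⁻¹ := by
  classical
  set s := ∑ j, l j
  set p : ℝ := (Fintype.card ι : ℝ)
  set b : ι → ℝ := fun j => (l j + c * s)⁻¹
  have hp : 1 ≤ p := Nat.one_le_cast.2 (Fintype.card_pos_iff.2 ⟨i⟩)
  have hpos : ∀ j, 0 < l j + c * s := fun j => by have := hl j; positivity
  have hb_le : b i ≤ (c * s)⁻¹ := inv_anti₀ (by positivity) (le_add_of_nonneg_left (hl i))
  have hb_ge : ∀ j, ((1 + c) * s)⁻¹ ≤ b j := fun j =>
    inv_anti₀ (hpos j) (by linarith [single_le_sum (fun k _ => hl k) (mem_univ j) (f := l)])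
  have hrest : (p - 1) * ((1 + c) * s)⁻¹ ≤ ∑ j ∈ univ.erase i, b j := by
    have := card_nsmul_le_sum (univ.erase i) b _ (fun j _ => hb_ge j)
    rwa [card_erase_of_mem (mem_univ i), card_univ, nsmul_eq_mul,
      Nat.cast_sub (Fintype.card_pos_iff.2 ⟨i⟩), Nat.cast_one] at this
  rw [← add_sum_erase _ _ (mem_univ i)]
  have hκ : 1 - (p - 1) * c / (p * (1 + c)) = (p + c) / (p * (1 + c)) := by
    field_simp; ring
  rw [hκ, div_mul_eq_mul_div, le_div_iff₀ (by positivity)]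
  suffices (p - 1) * c * b i ≤ (p + c) * ∑ j ∈ univ.erase i, b j by linarith
  calc (p - 1) * c * b i ≤ (p - 1) * c * (c * s)⁻¹ := by gcongr
    _ = (1 + c) * ((p - 1) * ((1 + c) * s)⁻¹) := by field_simp
    _ ≤ (p + c) * ((p - 1) * ((1 + c) * s)⁻¹) := by gcongr
    _ ≤ (p + c) * ∑ j ∈ univ.erase i, b j := by gcongr

theorem trace_V3W_refined_bound_general (p : ℕ) (W : Matrix (Fin p) (Fin p) ℝ)
    (hW : W.PosSemidef) (htr : 0 < W.trace) (c : ℝ) (hc : 0 < c)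
    (V : Matrix (Fin p) (Fin p) ℝ) (hV : V = (W + (c * W.trace) • 1)⁻¹) :
    (V * V * V * W).trace
      ≤ (V * V * W).trace * V.trace * (1 - ((p : ℝ) - 1) * c / (p * (1 + c))) := by
  set l := hW.isHermitian.eigenvalues
  set φ := conjStarAlgAut ℝ (Matrix (Fin p) (Fin p) ℝ) (star hW.isHermitian.eigenvectorUnitary)
  have hφW : φ W = diagonal l :=
    hW.isHermitian.conjStarAlgAut_star_eigenvectorUnitary
  have htrW : W.trace = ∑ i, l i := by simpa using hW.isHermitian.trace_eq_sum_eigenvalues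
  have hl : ∀ i, 0 ≤ l i := hW.eigenvalues_nonneg
  set b : Fin p → ℝ := fun i => (l i + c * ∑ j, l j)⁻¹
  have hφV : φ V = diagonal b := by
    have hpos : ∀ i, l i + c * ∑ j, l j ≠ 0 := fun i => by
      have := hl i; rw [← htrW]; positivity
    rw [hV, conjStarAlgAut_inv, map_add, map_smul, map_one, hφW, htrW, smul_one_eq_diagonal,
      diagonal_add, inv_diagonal_of_ne_zero hpos]
    rfl
  have htrace : ∀ A, (φ A).trace = A.trace := trace_conjStarAlgAut_s7 _
  rw [← htrace, ← htrace (V * V * W), ← htrace V]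
  simp only [map_mul, hφV, hφW, diagonal_mul_diagonal, trace_diagonal, sum_mul]
  refine sum_le_sum fun i _ => ?_
  have hb := inv_add_le_mul_sum_inv hl (htrW ▸ htr) hc i
  rw [Fintype.card_fin] at hb
  linarith [mul_le_mul_of_nonneg_left hb (mul_nonneg (mul_self_nonneg (b i)) (hl i))]

/-- With `V = (W + c·(tr W)·I_p)⁻¹`, one has
`tr(V³ W) ≤ tr(V² W)·tr(V)·(1 − (p − 1)c/(p(1 + c)))`. -/
theorem trace_V3W_refined_bound (p : ℕ) (hp : 1 ≤ p) (W : Matrix (Fin p) (Fin p) ℝ)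
    (hW : W.PosSemidef) (htr : 0 < W.trace) (c : ℝ) (hc : 0 < c)
    (V : Matrix (Fin p) (Fin p) ℝ) (hV : V = (W + (c * W.trace) • 1)⁻¹) :
    (V * V * V * W).trace
      ≤ (V * V * W).trace * V.trace * (1 - ((p : ℝ) - 1) * c / (p * (1 + c))) :=
  trace_V3W_refined_bound_general p W hW htr c hc V hV
end

section
/- With V = (W + c·(tr W)·I_p)⁻¹, one has −c·(tr(V)·tr(W) − tr(V W))/(1 + c p) ≤ −tr(V W) + (1 + c)·tr(V² W²) ≤ 0. -/
/-!
Diagonalise `W`: its eigenvalues `eᵢ ≥ 0` sum to `t = tr W`, `V` has eigenvalues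
`vᵢ = (eᵢ + c t)⁻¹`, and all traces become sums over `i`. With `μᵢ = vᵢ eᵢ` and `x = ∑ μᵢ`,
the upper bound holds termwise, since `(1 + c) μᵢ ≤ 1` amounts to `eᵢ ≤ t`. For the lower bound,
`c t · tr V = p - x`, and Cauchy–Schwarz `x² ≤ p ∑ μᵢ²` reduces the claim to
`((1 + c) x - p) ((1 + c p) x - p) ≥ 0`; both factors are nonpositive, the second by the
AM–HM inequality for the numbers `eᵢ + c t`.
-/

open Finset
open scoped ComplexOrder

section Spectral

variable {n 𝕜 : Type*} [Fintype n] [DecidableEq n] [RCLike 𝕜]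

theorem Matrix.IsHermitian.trace_cfc_s8 {A : Matrix n n 𝕜} (hA : A.IsHermitian) (f : ℝ → ℝ) :
    (cfc f A).trace = ∑ i, (f (hA.eigenvalues i) : 𝕜) := by
  rw [hA.cfc_eq, IsHermitian.cfc, Unitary.conjStarAlgAut_apply, trace_mul_cycle,
    Unitary.coe_star_mul_self, one_mul, trace_diagonal]
  rfl

theorem Matrix.cfc_mul_of_finite (A : Matrix n n 𝕜) (f g : ℝ → ℝ) :
    cfc (fun x => f x * g x) A = cfc f A * cfc g A :=
  cfc_mul f g A (A.finite_real_spectrum.continuousOn _) (A.finite_real_spectrum.continuousOn _)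

theorem Matrix.PosSemidef.inv_add_smul_one_eq_cfc {A : Matrix n n 𝕜} (hA : A.PosSemidef) {s : ℝ}
    (hs : 0 < s) : (A + s • 1)⁻¹ = cfc (fun x => (x + s)⁻¹) A := by
  have hA' : IsSelfAdjoint A := hA.isHermitian
  have hshift : cfc (fun x => x + s) A = A + s • 1 := by
    rw [← Algebra.algebraMap_eq_smul_one]
    nth_rw 2 [← cfc_id' ℝ A]
    exact cfc_add_const s (fun x => x) A (A.finite_real_spectrum.continuousOn _)
  refine Matrix.inv_eq_right_inv ?_
  rw [← hshift, ← Matrix.cfc_mul_of_finite, ← cfc_one ℝ A]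
  refine cfc_congr fun x hx => mul_inv_cancel₀ ?_
  rw [hA.isHermitian.spectrum_real_eq_range_eigenvalues] at hx
  obtain ⟨i, rfl⟩ := hx
  linarith [hA.eigenvalues_nonneg i]

end Spectral

section Resolvent

variable {ι : Type*} [Fintype ι] {e v : ι → ℝ} {c : ℝ}

theorem sum_mul_add_mul_sum_eq_card (hv : ∀ i, v i * (e i + c * ∑ j, e j) = 1) :
    ∑ i, v i * e i + c * (∑ i, e i) * ∑ i, v i = Fintype.card ι := by
  have h : ∑ i, (v i * e i + c * (∑ j, e j) * v i) = ∑ _i : ι, (1 : ℝ) :=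
    sum_congr rfl fun i _ => by linear_combination hv i
  rw [sum_add_distrib, ← mul_sum] at h
  simpa using h

theorem one_add_mul_card_mul_sum_mul_le_card (he : ∀ i, 0 ≤ e i) (ht : 0 < ∑ i, e i)
    (hc : 0 < c) (hv : ∀ i, v i * (e i + c * ∑ j, e j) = 1) :
    (1 + c * Fintype.card ι) * ∑ i, v i * e i ≤ Fintype.card ι := by
  set t := ∑ i, e i
  set p : ℝ := (Fintype.card ι : ℝ)
  have hpos : ∀ i, 0 < e i + c * t := fun i => add_pos_of_nonneg_of_pos (he i) (mul_pos hc ht)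
  have hamhm : p ^ 2 / (t + p * (c * t)) ≤ ∑ i, v i := by
    have := sq_sum_div_le_sum_sq_div univ (fun _ => (1 : ℝ)) (fun i _ => hpos i)
    simpa [sum_add_distrib, p, t, eq_one_div_of_mul_eq_one_left (hv _)] using this
  rw [div_le_iff₀ (by positivity)] at hamhm
  linear_combination (1 + c * p) * sum_mul_add_mul_sum_eq_card hv + c * hamhm

theorem sum_resolvent_bounds (he : ∀ i, 0 ≤ e i) (ht : 0 < ∑ i, e i) (hc : 0 < c)
    (hv : ∀ i, v i * (e i + c * ∑ j, e j) = 1) :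
    -(c * ((∑ i, v i) * (∑ i, e i) - ∑ i, v i * e i)) / (1 + c * Fintype.card ι)
        ≤ -(∑ i, v i * e i) + (1 + c) * ∑ i, v i * v i * e i * e i ∧
      -(∑ i, v i * e i) + (1 + c) * ∑ i, v i * v i * e i * e i ≤ 0 := by
  have hsum := sum_mul_add_mul_sum_eq_card hv
  have hjensen := one_add_mul_card_mul_sum_mul_le_card he ht hc hv
  set t := ∑ i, e i
  set p : ℝ := (Fintype.card ι : ℝ)
  set x := ∑ i, v i * e i
  set y := ∑ i, v i * v i * e i * e i
  have hvpos : ∀ i, 0 < v i := fun i =>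
    pos_of_mul_pos_left (hv i ▸ one_pos) (add_pos_of_nonneg_of_pos (he i) (mul_pos hc ht)).le
  have hterm : ∀ i, 0 ≤ v i * e i ∧ (1 + c) * (v i * e i) ≤ 1 := fun i => by
    refine ⟨mul_nonneg (hvpos i).le (he i), ?_⟩
    have hle : e i ≤ t := single_le_sum (fun j _ => he j) (mem_univ i)
    linear_combination hv i +
      mul_le_mul_of_nonneg_left (mul_le_mul_of_nonneg_left hle hc.le) (hvpos i).le
  have hupper : (1 + c) * y ≤ x := by
    rw [mul_sum]
    refine sum_le_sum fun i _ => ?_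
    linear_combination mul_le_mul_of_nonneg_left (hterm i).2 (hterm i).1
  have hx : (1 + c) * x ≤ p := by
    simpa [x, mul_sum] using sum_le_sum fun i (_ : i ∈ univ) => (hterm i).2
  have hp : 0 < p := by
    rcases isEmpty_or_nonempty ι with hι | hι
    · simp [t] at ht
    · exact Nat.cast_pos.mpr Fintype.card_pos
  have hcs : x ^ 2 ≤ p * y := by
    rw [show y = ∑ i, (v i * e i) ^ 2 from sum_congr rfl fun i _ => by ring]
    simpa using sq_sum_le_card_mul_sum_sq (s := univ) (f := fun i => v i * e i)
  refine ⟨?_, by linarith⟩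
  rw [div_le_iff₀ (by positivity), show c * ((∑ i, v i) * t - x) = p - (1 + c) * x by linarith]
  refine le_of_mul_le_mul_left ?_ hp
  have hfactor : 0 ≤ ((1 + c) * x - p) * ((1 + c * p) * x - p) :=
    mul_nonneg_of_nonpos_of_nonpos (by linarith) (by linarith)
  nlinarith [mul_le_mul_of_nonneg_left hcs (by positivity : 0 ≤ (1 + c) * (1 + c * p))]

end Resolvent

theorem trace_V2W2_bounds_general (p : ℕ) (W : Matrix (Fin p) (Fin p) ℝ)
    (hW : W.PosSemidef) (htr : 0 < W.trace) (c : ℝ) (hc : 0 < c)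
    (V : Matrix (Fin p) (Fin p) ℝ) (hV : V = (W + (c * W.trace) • 1)⁻¹) :
    -(c * (V.trace * W.trace - (V * W).trace)) / (1 + c * p)
        ≤ -(V * W).trace + (1 + c) * (V * V * W * W).trace ∧
      -(V * W).trace + (1 + c) * (V * V * W * W).trace ≤ 0 := by
  have hW' : IsSelfAdjoint W := hW.isHermitian
  set g : ℝ → ℝ := fun x => (x + c * W.trace)⁻¹
  have hVg : V = cfc g W := hV.trans (hW.inv_add_smul_one_eq_cfc (mul_pos hc htr))
  have hVW : V * W = cfc (fun x => g x * x) W := by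
    rw [hVg, W.cfc_mul_of_finite g (fun x => x), cfc_id' ℝ W]
  have hVVWW : V * V * W * W = cfc (fun x => g x * g x * x * x) W := by
    rw [W.cfc_mul_of_finite (fun x => g x * g x * x) (fun x => x),
      W.cfc_mul_of_finite (fun x => g x * g x) (fun x => x), W.cfc_mul_of_finite g g,
      cfc_id' ℝ W, hVg]
  have htr_eq : W.trace = ∑ i, hW.isHermitian.eigenvalues i := by
    simpa using hW.isHermitian.trace_eq_sum_eigenvalues
  rw [hVVWW, hVW, hVg, hW.isHermitian.trace_cfc_s8, hW.isHermitian.trace_cfc_s8,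
    hW.isHermitian.trace_cfc_s8]
  set e := hW.isHermitian.eigenvalues
  have hv : ∀ i, g (e i) * (e i + c * ∑ j, e j) = 1 := fun i => by
    rw [← htr_eq]
    exact inv_mul_cancel₀ (add_pos_of_nonneg_of_pos (hW.eigenvalues_nonneg i) (mul_pos hc htr)).ne'
  have := sum_resolvent_bounds (fun i => hW.eigenvalues_nonneg i) (htr_eq ▸ htr) hc hv
  rw [← htr_eq, Fintype.card_fin] at this
  simpa using this

/-- With `V = (W + c·(tr W)·I_p)⁻¹`, one has
`−c·(tr(V)·tr(W) − tr(V W))/(1 + c p) ≤ −tr(V W) + (1 + c)·tr(V² W²) ≤ 0`. -/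
theorem trace_V2W2_bounds (p : ℕ) (hp : 1 ≤ p) (W : Matrix (Fin p) (Fin p) ℝ)
    (hW : W.PosSemidef) (htr : 0 < W.trace) (c : ℝ) (hc : 0 < c)
    (V : Matrix (Fin p) (Fin p) ℝ) (hV : V = (W + (c * W.trace) • 1)⁻¹) :
    -(c * (V.trace * W.trace - (V * W).trace)) / (1 + c * p)
        ≤ -(V * W).trace + (1 + c) * (V * V * W * W).trace ∧
      -(V * W).trace + (1 + c) * (V * V * W * W).trace ≤ 0 :=
  trace_V2W2_bounds_general p W hW htr c hc V hV
end

section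
/- Let n ≥ 2 and p ≥ 1 be integers and let W be a p×p real symmetric positive semidefinite matrix with tr W > 0. For c > 0 define V(c) = (W + α̂(c) I_p)⁻¹ and â_S(c) = ((n − p − 1)·tr V(c) + α̂(c)·(tr V(c))²)/tr(V(c)² W) − (2c₀(c) + 1), where either α̂(c) = c with c₀(c) = 0, or α̂(c) = c·tr W with c₀(c) = c. Then as c → ∞, the matrix â_S(c)·V(c) converges (entrywise) to (((n−1)p)/tr W)·I_p in the case α̂(c) = c, and to (((n−1)p − 2)/tr W)·I_p in the case α̂(c) = c·tr W. -/
open Matrix Filter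

/-- `V = (W + α I_p)⁻¹`. -/
noncomputable def Vr (p : ℕ) (W : Matrix (Fin p) (Fin p) ℝ) (α : ℝ) :
    Matrix (Fin p) (Fin p) ℝ :=
  (W + α • 1)⁻¹

/-- The SURE-minimizing weight `â_S` as a function of `W`, the ridge value `α` and `c₀`. -/
noncomputable def aSv (n p : ℕ) (W : Matrix (Fin p) (Fin p) ℝ) (α c0 : ℝ) : ℝ :=
  (((n : ℝ) - p - 1) * (Vr p W α).trace + α * ((Vr p W α).trace) ^ 2) /
      (Vr p W α * Vr p W α * W).trace
    - (2 * c0 + 1)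

/-- The SURE-minimizing second weight `b̂_S`. -/
noncomputable def bSv (n p : ℕ) (W : Matrix (Fin p) (Fin p) ℝ) (α c0 : ℝ) : ℝ :=
  (((n : ℝ) - 1) * p - 2) - (Vr p W α * W).trace * aSv n p W α c0

/-!
Write `α` for the ridge value. Since `α • (W + α • 1)⁻¹ = (α⁻¹ • W + 1)⁻¹ → 1`, continuity of
trace and product gives `α tr V → p` and `α² tr (V² W) → tr W`, hence
`â_S(α) / α → ((n - p - 1) p + p²) / tr W = (n - 1) p / tr W` when `c₀ = 0`, and
`â_S(α) • V(α) = (â_S(α) / α) • (α • V(α))` has the stated limit. Taking `c₀ = c` at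
`α = c tr W` only subtracts `2c = (2 / tr W) α` from `â_S`, which moves the limit by
`-(2 / tr W) • 1`.
-/

open Topology

theorem Matrix.inv_smul_of_ne_zero {ι K : Type*} [Fintype ι] [DecidableEq ι] [Field K]
    (A : Matrix ι ι K) {k : K} (hk : k ≠ 0) : (k • A)⁻¹ = k⁻¹ • A⁻¹ := by
  by_cases hA : IsUnit A.det
  · exact Matrix.inv_smul' A (Units.mk0 k hk) hA
  · have hkA : ¬IsUnit (k • A).det := by
      simpa [det_smul, hk] using hA
    rw [nonsing_inv_apply_not_isUnit _ hA, nonsing_inv_apply_not_isUnit _ hkA, smul_zero]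

theorem Matrix.tendsto_smul_inv_add_smul_one {ι : Type*} [Fintype ι] [DecidableEq ι]
    (A : Matrix ι ι ℝ) : Tendsto (fun α : ℝ => α • (A + α • 1)⁻¹) atTop (𝓝 1) := by
  have h_inv_cont : ContinuousAt Inv.inv (1 : Matrix ι ι ℝ) :=
    continuousAt_matrix_inv _ (by simp)
  have h_lim : Tendsto (fun α : ℝ => α⁻¹ • A + 1) atTop (𝓝 1) := by
    simpa using ((tendsto_inv_atTop_zero (𝕜 := ℝ)).smul_const A).add_const 1
  have h := h_inv_cont.tendsto.comp h_lim
  rw [inv_one] at h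
  refine h.congr' ?_
  filter_upwards [eventually_ne_atTop 0] with α hα
  have h_factor : α⁻¹ • A + 1 = α⁻¹ • (A + α • 1) := by
    rw [smul_add, smul_smul, inv_mul_cancel₀ hα, one_smul]
  rw [Function.comp_apply, h_factor, inv_smul_of_ne_zero _ (inv_ne_zero hα), inv_inv]

section

variable {p : ℕ}

theorem tendsto_smul_Vr (W : Matrix (Fin p) (Fin p) ℝ) :
    Tendsto (fun α : ℝ => α • Vr p W α) atTop (𝓝 1) :=
  tendsto_smul_inv_add_smul_one W

theorem tendsto_mul_trace_Vr (W : Matrix (Fin p) (Fin p) ℝ) :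
    Tendsto (fun α : ℝ => α * (Vr p W α).trace) atTop (𝓝 p) := by
  simpa [Function.comp_def] using ((continuous_id.matrix_trace).tendsto _).comp (tendsto_smul_Vr W)

theorem tendsto_sq_mul_trace_Vr_mul_Vr_mul (W : Matrix (Fin p) (Fin p) ℝ) :
    Tendsto (fun α : ℝ => α ^ 2 * (Vr p W α * Vr p W α * W).trace) atTop (𝓝 W.trace) := by
  have h_cont : Continuous fun M : Matrix (Fin p) (Fin p) ℝ => (M * M * W).trace :=
    ((continuous_id.matrix_mul continuous_id).matrix_mul continuous_const).matrix_trace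
  have h := (h_cont.tendsto 1).comp (tendsto_smul_Vr W)
  rw [Matrix.mul_one, Matrix.one_mul] at h
  refine h.congr fun α => ?_
  rw [Function.comp_apply, smul_mul_smul_comm, Matrix.smul_mul, trace_smul, smul_eq_mul, sq]

theorem aSv_eq_aSv_zero_sub (n : ℕ) (W : Matrix (Fin p) (Fin p) ℝ) (α c0 : ℝ) :
    aSv n p W α c0 = aSv n p W α 0 - 2 * c0 := by
  simp only [aSv]
  ring

theorem tendsto_aSv_zero_div_self (n : ℕ) {W : Matrix (Fin p) (Fin p) ℝ} (htr : W.trace ≠ 0) :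
    Tendsto (fun α : ℝ => aSv n p W α 0 / α) atTop (𝓝 (((n : ℝ) - 1) * p / W.trace)) := by
  have h_ratio := (((tendsto_mul_trace_Vr W).const_mul ((n : ℝ) - p - 1)).add
    ((tendsto_mul_trace_Vr W).pow 2)).div (tendsto_sq_mul_trace_Vr_mul_Vr_mul W) htr
  have h := h_ratio.sub (tendsto_inv_atTop_zero (𝕜 := ℝ))
  rw [sub_zero, show ((n : ℝ) - p - 1) * p + (p : ℝ) ^ 2 = ((n : ℝ) - 1) * p by ring] at h
  refine h.congr' ?_
  filter_upwards [eventually_gt_atTop 0] with α hα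
  rcases eq_or_ne (Vr p W α * Vr p W α * W).trace 0 with h0 | h0
  · simp [aSv, h0, neg_div]
  · simp only [Pi.div_apply, aSv]
    field_simp
    ring

theorem tendsto_aSv_zero_smul_Vr (n : ℕ) {W : Matrix (Fin p) (Fin p) ℝ} (htr : W.trace ≠ 0) :
    Tendsto (fun α : ℝ => aSv n p W α 0 • Vr p W α) atTop
      (𝓝 ((((n : ℝ) - 1) * p / W.trace) • 1)) := by
  refine ((tendsto_aSv_zero_div_self n htr).smul (tendsto_smul_Vr W)).congr' ?_
  filter_upwards [eventually_ne_atTop 0] with α hα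
  rw [smul_smul, div_mul_cancel₀ _ hα]

end

theorem aS_smul_V_tendsto_atTop_general (n p : ℕ)
    (W : Matrix (Fin p) (Fin p) ℝ) (htr : 0 < W.trace) :
    Tendsto (fun c : ℝ => aSv n p W c 0 • Vr p W c) atTop
        (nhds (((((n : ℝ) - 1) * p) / W.trace) • (1 : Matrix (Fin p) (Fin p) ℝ))) ∧
      Tendsto (fun c : ℝ => aSv n p W (c * W.trace) c • Vr p W (c * W.trace)) atTop
        (nhds (((((n : ℝ) - 1) * p - 2) / W.trace) • (1 : Matrix (Fin p) (Fin p) ℝ))) := by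
  have h_ridge := tendsto_aSv_zero_smul_Vr n htr.ne'
  refine ⟨h_ridge, ?_⟩
  have h_shifted := (h_ridge.sub ((tendsto_smul_Vr W).const_smul (2 / W.trace))).comp
    (tendsto_id.atTop_mul_const htr)
  rw [sub_div, sub_smul]
  refine h_shifted.congr fun c => ?_
  rw [Function.comp_apply, id, aSv_eq_aSv_zero_sub _ _ _ c, sub_smul, smul_smul]
  field_simp

/-- As c → ∞, the matrix â_S(c)·V(c) converges entrywise to ((n−1)p/tr W)·I when
α̂ = c, and to (((n−1)p − 2)/tr W)·I when α̂ = c·tr W. -/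
theorem aS_smul_V_tendsto_atTop (n p : ℕ) (hn : 2 ≤ n) (hp : 1 ≤ p)
    (W : Matrix (Fin p) (Fin p) ℝ) (hW : W.PosSemidef) (htr : 0 < W.trace) :
    Tendsto (fun c : ℝ => aSv n p W c 0 • Vr p W c) atTop
        (nhds (((((n : ℝ) - 1) * p) / W.trace) • (1 : Matrix (Fin p) (Fin p) ℝ))) ∧
      Tendsto (fun c : ℝ => aSv n p W (c * W.trace) c • Vr p W (c * W.trace)) atTop
        (nhds (((((n : ℝ) - 1) * p - 2) / W.trace) • (1 : Matrix (Fin p) (Fin p) ℝ))) :=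
  aS_smul_V_tendsto_atTop_general n p W htr
end

section
/- Let n, p be integers with n − 1 ≥ p ≥ 1 and n − p − 1 ≥ 2, and let W be a p×p real symmetric positive definite matrix. For c > 0 define V(c) = (W + α̂(c) I_p)⁻¹, â_S(c) = ((n − p − 1)·tr V(c) + α̂(c)·(tr V(c))²)/tr(V(c)² W) − (2c₀(c) + 1), and b̂_S(c) = ((n−1)p − 2) − tr(V(c) W)·â_S(c), where either α̂(c) = c with c₀(c) = 0, or α̂(c) = c·tr W with c₀(c) = c. Then in both cases lim_{c → 0⁺} b̂_S(c) = p² + p − 2 = min{(n−1)² + (n−1) − 2, p² + p − 2}. -/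
/-!
At `α = 0` we have `V = W⁻¹`, so `tr (V² W) = tr W⁻¹ > 0`, `â_S = n − p − 2 − 2c₀` and
`tr (V W) = p`, whence `b̂_S = p² + p − 2 + 2pc₀`. Since `tr (V² W) ≠ 0` there, `b̂_S` is jointly
continuous in `(α, c₀)` at `(0, c₀)`, and both choices of `(α̂(c), c₀(c))` tend to `(0, 0)`.
-/

open Matrix Filter Topology

section

variable {n p : ℕ} {W : Matrix (Fin p) (Fin p) ℝ}

lemma continuousAt_Vr {α : ℝ} (h : (W + α • 1).det ≠ 0) : ContinuousAt (Vr p W) α := by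
  have hinv : ContinuousAt Inv.inv (W + α • (1 : Matrix (Fin p) (Fin p) ℝ)) := by
    apply continuousAt_matrix_inv
    rw [Ring.inverse_eq_inv']
    exact continuousAt_inv₀ h
  exact hinv.comp (f := fun α : ℝ => W + α • 1) (by fun_prop)

lemma Vr_zero : Vr p W 0 = W⁻¹ := by
  simp [Vr]

lemma Vr_zero_mul_self (hW : W.PosDef) : Vr p W 0 * W = 1 := by
  rw [Vr_zero, nonsing_inv_mul W (isUnit_iff_ne_zero.mpr hW.det_pos.ne')]

lemma trace_Vr_zero_mul_Vr_zero_mul (hW : W.PosDef) :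
    (Vr p W 0 * Vr p W 0 * W).trace = (W⁻¹).trace := by
  rw [mul_assoc, Vr_zero_mul_self hW, mul_one, Vr_zero]

lemma aSv_zero [NeZero p] (hW : W.PosDef) (c₀ : ℝ) :
    aSv n p W 0 c₀ = (n : ℝ) - p - 2 - 2 * c₀ := by
  have htr : (W⁻¹).trace ≠ 0 := hW.inv.trace_pos.ne'
  rw [aSv, trace_Vr_zero_mul_Vr_zero_mul hW, Vr_zero, zero_mul, add_zero, mul_div_assoc,
    div_self htr]
  ring

lemma bSv_zero [NeZero p] (hW : W.PosDef) (c₀ : ℝ) :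
    bSv n p W 0 c₀ = (p : ℝ) ^ 2 + p - 2 + 2 * p * c₀ := by
  rw [bSv, Vr_zero_mul_self hW, aSv_zero hW, trace_one, Fintype.card_fin]
  ring

lemma continuousAt_bSv [NeZero p] (hW : W.PosDef) (c₀ : ℝ) :
    ContinuousAt (fun q : ℝ × ℝ => bSv n p W q.1 q.2) (0, c₀) := by
  have hV : ContinuousAt (fun q : ℝ × ℝ => Vr p W q.1) (0, c₀) :=
    (continuousAt_Vr (by simpa using hW.det_pos.ne')).comp continuousAt_fst
  have hden : (Vr p W 0 * Vr p W 0 * W).trace ≠ 0 := by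
    rw [trace_Vr_zero_mul_Vr_zero_mul hW]
    exact hW.inv.trace_pos.ne'
  unfold bSv aSv
  fun_prop (disch := exact hden)

lemma tendsto_bSv [NeZero p] (hW : W.PosDef) {ι : Type*} {l : Filter ι} {α c : ι → ℝ}
    {c₀ : ℝ} (hα : Tendsto α l (𝓝 0)) (hc : Tendsto c l (𝓝 c₀)) :
    Tendsto (fun i => bSv n p W (α i) (c i)) l (𝓝 ((p : ℝ) ^ 2 + p - 2 + 2 * p * c₀)) := by
  have h := (continuousAt_bSv (n := n) hW c₀).tendsto.comp (hα.prodMk_nhds hc)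
  rwa [bSv_zero hW] at h

end

theorem bS_tendsto_zero_general (n p : ℕ) (hp : 1 ≤ p) (hn1 : p + 1 ≤ n)
    (W : Matrix (Fin p) (Fin p) ℝ) (hW : W.PosDef) :
    (Tendsto (fun c : ℝ => bSv n p W c 0)
        (nhdsWithin 0 (Set.Ioi 0)) (nhds ((p : ℝ) ^ 2 + p - 2)) ∧
      Tendsto (fun c : ℝ => bSv n p W (c * W.trace) c)
        (nhdsWithin 0 (Set.Ioi 0)) (nhds ((p : ℝ) ^ 2 + p - 2))) ∧
    (p : ℝ) ^ 2 + p - 2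
      = min (((n : ℝ) - 1) ^ 2 + ((n : ℝ) - 1) - 2) ((p : ℝ) ^ 2 + p - 2) := by
  have : NeZero p := ⟨by omega⟩
  have hc : Tendsto (fun c : ℝ => c) (𝓝[>] 0) (𝓝 0) := nhdsWithin_le_nhds
  refine ⟨⟨?_, ?_⟩, ?_⟩
  · simpa using tendsto_bSv (n := n) hW hc (tendsto_const_nhds (x := 0))
  · simpa using tendsto_bSv (n := n) hW (by simpa using hc.mul_const W.trace) hc
  · have hpn : (p : ℝ) ≤ n - 1 := by
      rw [le_sub_iff_add_le]
      exact_mod_cast hn1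
    rw [min_eq_right]
    nlinarith

/-- As c → 0⁺, the estimated weight b̂_S(c) converges to
p² + p − 2 = min{(n−1)² + (n−1) − 2, p² + p − 2}, both for α̂ = c (c₀ = 0)
and for α̂ = c·tr W (c₀ = c). -/
theorem bS_tendsto_zero (n p : ℕ) (hp : 1 ≤ p) (hn1 : p + 1 ≤ n) (hn3 : p + 3 ≤ n)
    (W : Matrix (Fin p) (Fin p) ℝ) (hW : W.PosDef) :
    (Tendsto (fun c : ℝ => bSv n p W c 0)
        (nhdsWithin 0 (Set.Ioi 0)) (nhds ((p : ℝ) ^ 2 + p - 2)) ∧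
      Tendsto (fun c : ℝ => bSv n p W (c * W.trace) c)
        (nhdsWithin 0 (Set.Ioi 0)) (nhds ((p : ℝ) ^ 2 + p - 2))) ∧
    (p : ℝ) ^ 2 + p - 2
      = min (((n : ℝ) - 1) ^ 2 + ((n : ℝ) - 1) - 2) ((p : ℝ) ^ 2 + p - 2) :=
  bS_tendsto_zero_general n p hp hn1 W hW
end
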